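/- Let G be an X–Y normalized graph, and let S ⊆ N(X) be a set such that no vertex of S is adjacent to a vertex of Y. Then there exists a subset S' ⊆ S with |S'| ≤ CE(S) and K(S') = K(S). -/

import Mathlib

variable {V : Type*}

/-- `K` is an `X`–`Y` separator of `G`: `K` avoids `X ∪ Y` and every walk
from a vertex of `X` to a vertex of `Y` meets `K` (i.e. there is no
`X`–`Y` path in `G \ K`). -/
def IsSeparator (G : SimpleGraph V) (X Y K : Set V) : Prop :=
  K ⊆ (X ∪ Y)ᶜ ∧
  ∀ x ∈ X, ∀ y ∈ Y, ∀ w : G.Walk x y, ∃ v ∈ w.support, v ∈ K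

/-- `NR G A B`: the vertices of `G \ B` that are not reachable from `A` in `G \ B`. -/
def NR (G : SimpleGraph V) (A B : Set V) : Set V :=
  {v | v ∉ B ∧ ¬ ∃ a ∈ A, ∃ w : G.Walk a v, ∀ x ∈ w.support, x ∉ B}

/-- `Reach G A B`: the vertices reachable from `A` in `G \ B`. -/
def Reach (G : SimpleGraph V) (A B : Set V) : Set V :=
  {v | ∃ a ∈ A, ∃ w : G.Walk a v, ∀ x ∈ w.support, x ∉ B}

/-- The order on `X`–`Y` separators: `K1 ≤ K2` iff `NR(G,Y,K1) ⊆ NR(G,Y,K2)`. -/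
def SepLE (G : SimpleGraph V) (Y K1 K2 : Set V) : Prop :=
  NR G Y K1 ⊆ NR G Y K2

/-- The strict order on `X`–`Y` separators. -/
def SepLT (G : SimpleGraph V) (Y K1 K2 : Set V) : Prop :=
  NR G Y K1 ⊆ NR G Y K2 ∧ NR G Y K1 ≠ NR G Y K2

/-- A minimal `X`–`Y` separator: no proper subset is an `X`–`Y` separator. -/
def IsMinimalSeparator (G : SimpleGraph V) (X Y K : Set V) : Prop :=
  IsSeparator G X Y K ∧ ∀ K' ⊂ K, ¬ IsSeparator G X Y K'

/-- An important `X`–`Y` separator: a minimal separator `K` such that there is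
no separator `K'` with `K < K'` and `|K'| ≤ |K|`. -/
def IsImportantSeparator (G : SimpleGraph V) (X Y K : Set V) : Prop :=
  IsMinimalSeparator G X Y K ∧
  ¬ ∃ K', IsSeparator G X Y K' ∧ SepLT G Y K K' ∧ K'.ncard ≤ K.ncard

/-- The minimum size of an `X`–`Y` separator of `G`. -/
noncomputable def minSepSize (G : SimpleGraph V) (X Y : Set V) : ℕ :=
  sInf {n | ∃ K, IsSeparator G X Y K ∧ K.ncard = n}

/-- The excess of a separator: its size minus the minimum separator size. -/
noncomputable def excess (G : SimpleGraph V) (X Y K : Set V) : ℕ :=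
  K.ncard - minSepSize G X Y

/-- The graph `Pr(G,X,Y,K)`: the vertices `NR(G,Y,K) \ X` are deleted (here:
made isolated), and every vertex of `X` is made adjacent to every vertex of `K`. -/
def PrGraph (G : SimpleGraph V) (X Y K : Set V) : SimpleGraph V where
  Adj u v := u ≠ v ∧ u ∉ NR G Y K \ X ∧ v ∉ NR G Y K \ X ∧
    (G.Adj u v ∨ (u ∈ X ∧ v ∈ K) ∨ (u ∈ K ∧ v ∈ X))
  symm := by
    constructor
    rintro u v ⟨h1, h2, h3, h4⟩
    refine ⟨h1.symm, h3, h2, ?_⟩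
    rcases h4 with h | h | h
    · exact Or.inl h.symm
    · exact Or.inr (Or.inr ⟨h.2, h.1⟩)
    · exact Or.inr (Or.inl ⟨h.2, h.1⟩)
  loopless := by constructor; rintro v ⟨h1, -⟩; exact h1 rfl

/-- `NSet G X` is `N(X)`: the set of vertices outside `X` adjacent to a vertex of `X`. -/
def NSet (G : SimpleGraph V) (X : Set V) : Set V :=
  {v | v ∉ X ∧ ∃ x ∈ X, G.Adj x v}

/-- `G` is `X`–`Y` normalized: `N(X)` is an `X`–`Y` separator and is
the unique smallest `X`–`Y` separator. -/
def Normalized (G : SimpleGraph V) (X Y : Set V) : Prop :=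
  IsSeparator G X Y (NSet G X) ∧
  ∀ K, IsSeparator G X Y K → K ≠ NSet G X → (NSet G X).ncard < K.ncard

/-- The cover excess `CE(S)`: the minimum excess of an `X`–`Y` separator disjoint from `S`. -/
noncomputable def CE (G : SimpleGraph V) (X Y S : Set V) : ℕ :=
  sInf {n | ∃ K, IsSeparator G X Y K ∧ Disjoint K S ∧ excess G X Y K = n}

/-- A witness of `S`: an `X`–`Y` separator disjoint from `S` whose excess equals `CE(S)`. -/
noncomputable def IsWitness (G : SimpleGraph V) (X Y S K : Set V) : Prop :=
  IsSeparator G X Y K ∧ Disjoint K S ∧ excess G X Y K = CE G X Y S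

/-- An important witness of `S`: a witness of `S` that is an important `X`–`Y` separator. -/
noncomputable def IsImportantWitness (G : SimpleGraph V) (X Y S K : Set V) : Prop :=
  IsWitness G X Y S K ∧ IsImportantSeparator G X Y K

/-!
The cover excess is monotone and submodular on subsets of `N(X)`: if `K` and `W` are witnesses
of `T₁` and `T₂`, with `X`-sides `R_K` and `R_W`, then `N(R_K ∪ R_W)` and `N(R_K ∩ R_W)` are
separators avoiding `T₁ ∪ T₂` and `T₁ ∩ T₂`, and `|N(·)|` is submodular. Hence `S` contains a set
`S'` with `CE(S') = CE(S)` and `|S'| ≤ CE(S)`: build it one vertex at a time, keeping a vertex only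
when it raises the cover excess. Once `CE(S') = CE(S)`, an important witness `K` of `S'` misses
`S`: for `s ∈ K ∩ S`, uncrossing `K` with a witness of `S' ∪ {s}` and pushing the result towards
`Y` gives a separator beyond `K` that is no larger. So `S'` and `S` have the same important
witnesses.
-/

lemma exists_subset_ncard_add_le_of_submodular {α : Type*} {S : Set α} (f : Set α → ℕ)
    (hmono : ∀ T₁ T₂, T₁ ⊆ T₂ → T₂ ⊆ S → f T₁ ≤ f T₂)
    (hsub : ∀ T₁ T₂, T₁ ⊆ S → T₂ ⊆ S → f (T₁ ∪ T₂) + f (T₁ ∩ T₂) ≤ f T₁ + f T₂)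
    {T : Set α} (hTS : T ⊆ S) (hT : T.Finite) :
    ∃ T' ⊆ T, f T' = f T ∧ T'.ncard + f ∅ ≤ f T := by
  induction T, hT using Set.Finite.induction_on with
  | empty => exact ⟨∅, subset_rfl, rfl, by simp⟩
  | @insert a T haT _ ih =>
    have hTS' : T ⊆ S := (Set.subset_insert a T).trans hTS
    obtain ⟨T', hT'T, hfT', hcard⟩ := ih hTS'
    have hle := hmono T (insert a T) (Set.subset_insert a T) hTS
    rcases hle.eq_or_lt with heq | hlt
    · exact ⟨T', hT'T.trans (Set.subset_insert a T), hfT'.trans heq, heq ▸ hcard⟩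
    have hsubT : insert a T' ⊆ insert a T := Set.insert_subset_insert hT'T
    -- uncrossing `insert a T'` with `T` yields `insert a T` and `T'`
    have huncross := hsub (insert a T') T (hsubT.trans hTS) hTS'
    rw [Set.insert_union, Set.union_eq_right.2 hT'T,
      Set.insert_inter_of_notMem haT, Set.inter_eq_left.2 hT'T] at huncross
    have hle' := hmono _ _ hsubT hTS
    have hcard' := Set.ncard_insert_le a T'
    exact ⟨insert a T', hsubT, by omega, by omega⟩

section

variable {G : SimpleGraph V} {A B R Z X Y K W S S' T T₁ T₂ : Set V} {u v : V}

lemma mem_reach_of_mem (hvA : v ∈ A) (hvB : v ∉ B) : v ∈ Reach G A B :=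
  ⟨v, hvA, .nil, by simpa using hvB⟩

lemma mem_reach_of_adj (hu : u ∈ Reach G A B) (huv : G.Adj u v) (hvB : v ∉ B) :
    v ∈ Reach G A B := by
  obtain ⟨a, ha, w, hw⟩ := hu
  refine ⟨a, ha, w.concat huv, fun x hx => ?_⟩
  rw [SimpleGraph.Walk.support_concat, List.mem_append, List.mem_singleton] at hx
  rcases hx with hx | rfl
  exacts [hw x hx, hvB]

lemma reach_subset_of_closed (hA : ∀ a ∈ A, a ∉ B → a ∈ Z)
    (hstep : ∀ u v, u ∈ Z → u ∉ B → G.Adj u v → v ∉ B → v ∈ Z) : Reach G A B ⊆ Z := by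
  suffices h : ∀ {a v} (w : G.Walk a v), a ∈ Z → (∀ x ∈ w.support, x ∉ B) → v ∈ Z by
    rintro v ⟨a, ha, w, hw⟩
    exact h w (hA a ha (hw a w.start_mem_support)) hw
  intro a v w
  induction w with
  | nil => exact fun ha _ => ha
  | cons huv p ih =>
    intro ha hw
    simp only [SimpleGraph.Walk.support_cons, List.mem_cons, forall_eq_or_imp] at hw
    exact ih (hstep _ _ ha hw.1 huv (hw.2 _ p.start_mem_support)) hw.2

lemma nset_reach_subset : NSet G (Reach G A B) ⊆ B := by
  rintro v ⟨hv, u, hu, huv⟩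
  by_contra hvB
  exact hv (mem_reach_of_adj hu huv hvB)

lemma disjoint_nset_self : Disjoint (NSet G R) R :=
  Set.disjoint_left.2 fun _ hv => hv.1

lemma reach_nset_subset (hAR : A ⊆ R) : Reach G A (NSet G R) ⊆ R :=
  reach_subset_of_closed (fun _ ha _ => hAR ha) fun u _ hu _ huv hv => by
    by_contra hvR
    exact hv ⟨hvR, u, hu, huv⟩

lemma reach_nset_subset_compl (hAR : Disjoint A R) : Reach G A (NSet G R) ⊆ Rᶜ :=
  reach_subset_of_closed (fun _ ha _ => Set.disjoint_left.1 hAR ha)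
    fun _ v hu huN huv _ hvR => huN ⟨hu, v, hvR, huv.symm⟩

lemma ncard_nset_union_add_ncard_nset_inter_le [Finite V] (A B : Set V) :
    (NSet G (A ∪ B)).ncard + (NSet G (A ∩ B)).ncard ≤ (NSet G A).ncard + (NSet G B).ncard := by
  have hunion : NSet G (A ∪ B) ∪ NSet G (A ∩ B) ⊆ NSet G A ∪ NSet G B := by
    rintro v (⟨hv, u, hu | hu, huv⟩ | ⟨hv, u, hu, huv⟩)
    · exact Or.inl ⟨fun h => hv (Or.inl h), u, hu, huv⟩
    · exact Or.inr ⟨fun h => hv (Or.inr h), u, hu, huv⟩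
    · by_cases hvA : v ∈ A
      · exact Or.inr ⟨fun h => hv ⟨hvA, h⟩, u, hu.2, huv⟩
      · exact Or.inl ⟨hvA, u, hu.1, huv⟩
  have hinter : NSet G (A ∪ B) ∩ NSet G (A ∩ B) ⊆ NSet G A ∩ NSet G B := by
    rintro v ⟨⟨hv, -⟩, -, u, hu, huv⟩
    exact ⟨⟨fun h => hv (Or.inl h), u, hu.1, huv⟩, fun h => hv (Or.inr h), u, hu.2, huv⟩
  have := Set.ncard_le_ncard hunion
  have := Set.ncard_le_ncard hinter
  have := Set.ncard_union_add_ncard_inter (NSet G (A ∪ B)) (NSet G (A ∩ B))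
  have := Set.ncard_union_add_ncard_inter (NSet G A) (NSet G B)
  omega

lemma isSeparator_comm : IsSeparator G X Y K ↔ IsSeparator G Y X K := by
  suffices h : ∀ {X Y : Set V}, IsSeparator G X Y K → IsSeparator G Y X K from ⟨h, h⟩
  rintro X Y ⟨hK, hsep⟩
  refine ⟨Set.union_comm X Y ▸ hK, fun y hy x hx w => ?_⟩
  obtain ⟨v, hv, hvK⟩ := hsep x hx y hy w.reverse
  exact ⟨v, by simpa using hv, hvK⟩

lemma isSeparator_iff_disjoint_reach :
    IsSeparator G X Y K ↔ K ⊆ (X ∪ Y)ᶜ ∧ Disjoint (Reach G X K) Y := by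
  refine and_congr_right fun _ => ⟨fun h => ?_, fun h x hx y hy w => ?_⟩
  · exact Set.disjoint_left.2 fun y ⟨x, hx, w, hw⟩ hy =>
      let ⟨v, hv, hvK⟩ := h x hx y hy w
      hw v hv hvK
  · by_contra! hw
    exact Set.disjoint_left.1 h ⟨x, hx, w, hw⟩ hy

namespace IsSeparator

lemma disjoint (hK : IsSeparator G X Y K) : Disjoint X Y :=
  Set.disjoint_left.2 fun x hxX hxY => by
    obtain ⟨v, hv, hvK⟩ := hK.2 x hxX x hxY .nil
    rw [SimpleGraph.Walk.support_nil, List.mem_singleton] at hv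
    exact hK.1 (hv ▸ hvK) (Or.inl hxX)

lemma disjoint_reach (hK : IsSeparator G X Y K) : Disjoint (Reach G X K) Y :=
  (isSeparator_iff_disjoint_reach.1 hK).2

lemma subset_reach (hK : IsSeparator G X Y K) : X ⊆ Reach G X K :=
  fun _ hx => mem_reach_of_mem hx fun hxK => hK.1 hxK (Or.inl hx)

lemma not_adj_of_mem_reach (hK : IsSeparator G X Y K) (hu : u ∈ Reach G X K) (hv : v ∈ Y) :
    ¬ G.Adj u v := fun huv =>
  Set.disjoint_left.1 hK.disjoint_reach (mem_reach_of_adj hu huv fun hvK => hK.1 hvK (Or.inr hv)) hv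

lemma mem_reach_of_mem_nset (hK : IsSeparator G X Y K) (hv : v ∈ NSet G X) (hvK : v ∉ K) :
    v ∈ Reach G X K := by
  obtain ⟨-, x, hx, hxv⟩ := hv
  exact mem_reach_of_adj (hK.subset_reach hx) hxv hvK

lemma subset_reach_of_subset_nset (hK : IsSeparator G X Y K) (hT : T ⊆ NSet G X)
    (hKT : Disjoint K T) : T ⊆ Reach G X K :=
  fun _ ht => hK.mem_reach_of_mem_nset (hT ht) (Set.disjoint_right.1 hKT ht)

end IsSeparator

lemma isSeparator_nset (hXR : X ⊆ R) (hRY : Disjoint R Y)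
    (hadj : ∀ u ∈ R, ∀ y ∈ Y, ¬ G.Adj u y) : IsSeparator G X Y (NSet G R) := by
  refine isSeparator_iff_disjoint_reach.2 ⟨?_, hRY.mono_left (reach_nset_subset hXR)⟩
  rintro v ⟨hvR, u, hu, huv⟩ (hvX | hvY)
  exacts [hvR (hXR hvX), hadj u hu v hvY huv]

lemma isSeparator_nset_of_subset_reach_union (hK : IsSeparator G X Y K)
    (hW : IsSeparator G X Y W) (hXR : X ⊆ R) (hR : R ⊆ Reach G X K ∪ Reach G X W) :
    IsSeparator G X Y (NSet G R) := by
  refine isSeparator_nset hXR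
    ((Set.disjoint_union_left.2 ⟨hK.disjoint_reach, hW.disjoint_reach⟩).mono_left hR)
    fun u hu y hy => ?_
  rcases hR hu with hu | hu
  exacts [hK.not_adj_of_mem_reach hu hy, hW.not_adj_of_mem_reach hu hy]

lemma exists_isSeparator_disjoint (hN : IsSeparator G X Y (NSet G X)) (hS : S ⊆ NSet G X)
    (hSY : ∀ s ∈ S, ∀ y ∈ Y, ¬ G.Adj s y) : ∃ K, IsSeparator G X Y K ∧ Disjoint K S := by
  have hSdisj : Disjoint S Y := Set.disjoint_left.2 fun s hs hsY => hN.1 (hS hs) (Or.inr hsY)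
  refine ⟨NSet G (X ∪ S), isSeparator_nset Set.subset_union_left
    (Set.disjoint_union_left.2 ⟨hN.disjoint, hSdisj⟩) ?_,
    disjoint_nset_self.mono_right Set.subset_union_right⟩
  rintro u (hu | hu) y hy huy
  · exact hN.1 ⟨Set.disjoint_right.1 hN.disjoint hy, u, hu, huy⟩ (Or.inr hy)
  · exact hSY u hu y hy huy

namespace IsMinimalSeparator

lemma exists_adj_of_mem (hK : IsMinimalSeparator G X Y K) (hv : v ∈ K) :
    ∃ u ∈ Reach G X K, G.Adj u v := by
  by_contra! hnadj
  refine hK.2 (K \ {v}) (Set.sdiff_singleton_ssubset.2 hv)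
    (isSeparator_iff_disjoint_reach.2 ⟨Set.sdiff_subset.trans hK.1.1, ?_⟩)
  refine hK.1.disjoint_reach.mono_left
    (reach_subset_of_closed (fun _ ha _ => hK.1.subset_reach ha) fun u w hu _ huw hw => ?_)
  by_cases hwv : w = v
  · exact absurd (hwv ▸ huw) (hnadj u hu)
  · exact mem_reach_of_adj hu huw fun hwK => hw ⟨hwK, hwv⟩

/-- A first vertex of `K` on a walk from `Y` would, by minimality, be adjacent to
`Reach G X K ⊆ R`, hence lie in `R`, which such a walk cannot enter without crossing
`NSet G R`. -/
lemma reach_push_subset (hK : IsMinimalSeparator G X Y K) (hKR : Reach G X K ⊆ R)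
    (hRY : Disjoint R Y) (hN : IsSeparator G X Y (NSet G R)) :
    Reach G Y (NSet G R ∩ (K ∪ Reach G Y K)) ⊆ Reach G Y K ∩ Reach G Y (NSet G R) := by
  refine reach_subset_of_closed (fun y hy _ => ⟨mem_reach_of_mem hy fun hyK => hK.1.1 hyK
    (Or.inr hy), mem_reach_of_mem hy fun hyN => hN.1 hyN (Or.inr hy)⟩) ?_
  rintro u v ⟨huK, huN⟩ - huv hv
  have hvN : v ∉ NSet G R := fun hvN =>
    hv ⟨hvN, Or.inr (mem_reach_of_adj huK huv fun hvK => hv ⟨hvN, Or.inl hvK⟩)⟩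
  have hvRN : v ∈ Reach G Y (NSet G R) := mem_reach_of_adj huN huv hvN
  have hvK : v ∉ K := fun hvK => by
    obtain ⟨w, hw, hwv⟩ := hK.exists_adj_of_mem hvK
    have hvR : v ∈ R := by
      by_contra hvR
      exact hvN ⟨hvR, w, hKR hw, hwv⟩
    exact reach_nset_subset_compl hRY.symm hvRN hvR
  exact ⟨mem_reach_of_adj huK huv hvK, hvRN⟩

lemma exists_sepLT_subset_nset (hK : IsMinimalSeparator G X Y K) (hKR : Reach G X K ⊆ R)
    (hRY : Disjoint R Y) (hN : IsSeparator G X Y (NSet G R)) (hKR_ne : (K ∩ R).Nonempty) :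
    ∃ K' ⊆ NSet G R, IsSeparator G X Y K' ∧ SepLT G Y K K' := by
  obtain ⟨s, hsK, hsR⟩ := hKR_ne
  have hpush := hK.reach_push_subset hKR hRY hN
  have hXR : X ⊆ R := hK.1.subset_reach.trans hKR
  refine ⟨NSet G R ∩ (K ∪ Reach G Y K), Set.inter_subset_left, ?_,
    fun v ⟨hvK, hvY⟩ => ⟨?_, ?_⟩, fun hNR => ?_⟩
  · refine isSeparator_comm.2 (isSeparator_iff_disjoint_reach.2 ⟨?_, ?_⟩)
    · exact fun v hv => Set.union_comm Y X ▸ hN.1 hv.1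
    · exact Set.disjoint_right.2 fun x hx hxY =>
        reach_nset_subset_compl hRY.symm (hpush hxY).2 (hXR hx)
  · exact fun hv => hv.2.elim hvK hvY
  · exact fun hvY' => hvY (hpush hvY').1
  · have hs : s ∈ NR G Y (NSet G R ∩ (K ∪ Reach G Y K)) :=
      ⟨fun hs => disjoint_nset_self.notMem_of_mem_left hs.1 hsR,
        fun hsY => reach_nset_subset_compl hRY.symm (hpush hsY).2 hsR⟩
    exact (hNR ▸ hs).1 hsK

end IsMinimalSeparator

lemma minSepSize_le (hK : IsSeparator G X Y K) : minSepSize G X Y ≤ K.ncard :=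
  Nat.sInf_le ⟨K, hK, rfl⟩

lemma CE_le_excess (hK : IsSeparator G X Y K) (hKT : Disjoint K T) :
    CE G X Y T ≤ excess G X Y K :=
  Nat.sInf_le ⟨K, hK, hKT, rfl⟩

lemma exists_isWitness (hT : ∃ K, IsSeparator G X Y K ∧ Disjoint K T) :
    ∃ K, IsWitness G X Y T K := by
  obtain ⟨K₀, hK₀, hK₀T⟩ := hT
  obtain ⟨K, hK, hKT, hKe⟩ := Nat.sInf_mem (s := {n | ∃ K, IsSeparator G X Y K ∧
    Disjoint K T ∧ excess G X Y K = n}) ⟨_, K₀, hK₀, hK₀T, rfl⟩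
  exact ⟨K, hK, hKT, hKe⟩

lemma IsWitness.ncard_eq (hK : IsWitness G X Y T K) :
    K.ncard = minSepSize G X Y + CE G X Y T := by
  have := minSepSize_le hK.1
  have : K.ncard - minSepSize G X Y = CE G X Y T := hK.2.2
  omega

lemma CE_mono (hT : T₁ ⊆ T₂) (hT₂ : ∃ K, IsSeparator G X Y K ∧ Disjoint K T₂) :
    CE G X Y T₁ ≤ CE G X Y T₂ := by
  obtain ⟨K, hK⟩ := exists_isWitness hT₂
  exact hK.2.2 ▸ CE_le_excess hK.1 (hK.2.1.mono_right hT)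

/-- Submodularity of `NSet G`, with `minSepSize G X Y + CE G X Y (T₁ ∩ T₂)` bounding the size of
the separator `NSet G (Reach G X K ∩ Reach G X W)`, which avoids `T₁ ∩ T₂`. -/
lemma IsWitness.ncard_nset_reach_union_add_le [Finite V] (hK : IsWitness G X Y T₁ K)
    (hW : IsWitness G X Y T₂ W) (hT : T₁ ∩ T₂ ⊆ NSet G X) :
    (NSet G (Reach G X K ∪ Reach G X W)).ncard + (minSepSize G X Y + CE G X Y (T₁ ∩ T₂)) ≤
      K.ncard + W.ncard := by
  have hinter : IsSeparator G X Y (NSet G (Reach G X K ∩ Reach G X W)) :=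
    isSeparator_nset_of_subset_reach_union hK.1 hW.1
      (Set.subset_inter hK.1.subset_reach hW.1.subset_reach)
      (Set.inter_subset_left.trans Set.subset_union_left)
  have hT' : T₁ ∩ T₂ ⊆ Reach G X K ∩ Reach G X W :=
    Set.subset_inter
      (hK.1.subset_reach_of_subset_nset hT (hK.2.1.mono_right Set.inter_subset_left))
      (hW.1.subset_reach_of_subset_nset hT (hW.2.1.mono_right Set.inter_subset_right))
  have hCE := CE_le_excess hinter (disjoint_nset_self.mono_right hT')
  have hmin := minSepSize_le hinter
  have hexc : excess G X Y (NSet G (Reach G X K ∩ Reach G X W)) =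
    (NSet G (Reach G X K ∩ Reach G X W)).ncard - minSepSize G X Y := rfl
  have hsubmod := ncard_nset_union_add_ncard_nset_inter_le (G := G) (Reach G X K) (Reach G X W)
  have hKcard := Set.ncard_le_ncard (nset_reach_subset (G := G) (A := X) (B := K))
  have hWcard := Set.ncard_le_ncard (nset_reach_subset (G := G) (A := X) (B := W))
  omega

lemma CE_union_add_CE_inter_le [Finite V] (hT₁ : T₁ ⊆ NSet G X) (hT₂ : T₂ ⊆ NSet G X)
    (hA₁ : ∃ K, IsSeparator G X Y K ∧ Disjoint K T₁)
    (hA₂ : ∃ K, IsSeparator G X Y K ∧ Disjoint K T₂) :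
    CE G X Y (T₁ ∪ T₂) + CE G X Y (T₁ ∩ T₂) ≤ CE G X Y T₁ + CE G X Y T₂ := by
  obtain ⟨K, hK⟩ := exists_isWitness hA₁
  obtain ⟨W, hW⟩ := exists_isWitness hA₂
  have hunion : IsSeparator G X Y (NSet G (Reach G X K ∪ Reach G X W)) :=
    isSeparator_nset_of_subset_reach_union hK.1 hW.1
      (hK.1.subset_reach.trans Set.subset_union_left) subset_rfl
  have hT : T₁ ∪ T₂ ⊆ Reach G X K ∪ Reach G X W :=
    Set.union_subset_union (hK.1.subset_reach_of_subset_nset hT₁ hK.2.1)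
      (hW.1.subset_reach_of_subset_nset hT₂ hW.2.1)
  have hCE := CE_le_excess hunion (disjoint_nset_self.mono_right hT)
  have hmin := minSepSize_le hunion
  have hexc : excess G X Y (NSet G (Reach G X K ∪ Reach G X W)) =
    (NSet G (Reach G X K ∪ Reach G X W)).ncard - minSepSize G X Y := rfl
  have huncross := hK.ncard_nset_reach_union_add_le hW (Set.inter_subset_left.trans hT₁)
  have hKcard := hK.ncard_eq
  have hWcard := hW.ncard_eq
  omega

/-- For `s ∈ K ∩ S`, adding `s` to `S'` does not raise the cover excess, so a witness `W` of
`insert s S'` uncrosses with `K` into `NSet G (Reach G X K ∪ Reach G X W)`, no larger than `K`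
and with `s` on its `X`-side; pushing it towards `Y` contradicts the importance of `K`. -/
lemma IsImportantWitness.disjoint_of_CE_eq [Finite V] (hK : IsImportantWitness G X Y S' K)
    (hS : S ⊆ NSet G X) (hA : ∃ K, IsSeparator G X Y K ∧ Disjoint K S) (hS' : S' ⊆ S)
    (hCE : CE G X Y S' = CE G X Y S) : Disjoint K S := by
  refine Set.disjoint_left.2 fun s hsK hsS => ?_
  obtain ⟨hKw, hKmin, himp⟩ := hK
  have hsub : insert s S' ⊆ S := Set.insert_subset hsS hS'
  have hAs : ∃ K, IsSeparator G X Y K ∧ Disjoint K (insert s S') :=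
    hA.imp fun _ h => ⟨h.1, h.2.mono_right hsub⟩
  have hCEs : CE G X Y (insert s S') = CE G X Y S' :=
    le_antisymm (hCE ▸ CE_mono hsub hA) (CE_mono (Set.subset_insert _ _) hAs)
  obtain ⟨W, hW⟩ := exists_isWitness hAs
  have hsW : s ∈ Reach G X W :=
    hW.1.mem_reach_of_mem_nset (hS hsS) (Set.disjoint_right.1 hW.2.1 (Set.mem_insert _ _))
  have hcard := hKw.ncard_nset_reach_union_add_le hW
    (Set.inter_subset_left.trans (hS'.trans hS))
  rw [Set.inter_eq_left.2 (Set.subset_insert _ _), hW.ncard_eq, hCEs] at hcard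
  obtain ⟨K', hK'N, hK'⟩ := hKmin.exists_sepLT_subset_nset Set.subset_union_left
    (Set.disjoint_union_left.2 ⟨hKw.1.disjoint_reach, hW.1.disjoint_reach⟩)
    (isSeparator_nset_of_subset_reach_union hKw.1 hW.1
      (hKw.1.subset_reach.trans Set.subset_union_left) subset_rfl)
    ⟨s, hsK, Or.inr hsW⟩
  exact himp ⟨K', hK'.1, hK'.2, (Set.ncard_le_ncard hK'N).trans (by omega)⟩

lemma isImportantWitness_iff_of_CE_eq [Finite V] (hS : S ⊆ NSet G X)
    (hA : ∃ K, IsSeparator G X Y K ∧ Disjoint K S) (hS' : S' ⊆ S)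
    (hCE : CE G X Y S' = CE G X Y S) :
    IsImportantWitness G X Y S' K ↔ IsImportantWitness G X Y S K :=
  ⟨fun hK => ⟨⟨hK.1.1, hK.disjoint_of_CE_eq hS hA hS' hCE, hCE ▸ hK.1.2.2⟩, hK.2⟩,
    fun hK => ⟨⟨hK.1.1, hK.1.2.1.mono_right hS', hCE ▸ hK.1.2.2⟩, hK.2⟩⟩

end

theorem exists_small_subset_same_important_witness_general
    {V : Type*} [Fintype V] (G : SimpleGraph V) (X Y S : Set V)
    (hnorm : Normalized G X Y)
    (hS : S ⊆ NSet G X) (hSY : ∀ s ∈ S, ∀ y ∈ Y, ¬ G.Adj s y) :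
    ∃ S' ⊆ S, S'.ncard ≤ CE G X Y S ∧
      ∀ K : Set V, IsImportantWitness G X Y S' K ↔ IsImportantWitness G X Y S K := by
  have hA : ∀ T ⊆ S, ∃ K, IsSeparator G X Y K ∧ Disjoint K T := fun T hT =>
    (exists_isSeparator_disjoint hnorm.1 hS hSY).imp fun _ h => ⟨h.1, h.2.mono_right hT⟩
  obtain ⟨S', hS', hCE, hcard⟩ := exists_subset_ncard_add_le_of_submodular (CE G X Y)
    (fun _ _ h₁₂ h₂ => CE_mono h₁₂ (hA _ h₂))
    (fun _ _ h₁ h₂ => CE_union_add_CE_inter_le (h₁.trans hS) (h₂.trans hS) (hA _ h₁) (hA _ h₂))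
    subset_rfl S.toFinite
  exact ⟨S', hS', le_of_add_le_left hcard,
    fun _ => isImportantWitness_iff_of_CE_eq hS (hA S subset_rfl) hS' hCE⟩

/-- Let `G` be an `X`–`Y` normalized graph and `S ⊆ N(X)` a
set no vertex of which is adjacent to a vertex of `Y`.  Then there exists
`S' ⊆ S` with `|S'| ≤ CE(S)` and `K(S') = K(S)` (the latter expressed by:
the important witnesses of `S'` and of `S` coincide). -/
theorem exists_small_subset_same_important_witness
    {V : Type*} [Fintype V] (G : SimpleGraph V) (X Y S : Set V)
    (hXY : Disjoint X Y) (hnorm : Normalized G X Y)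
    (hS : S ⊆ NSet G X) (hSY : ∀ s ∈ S, ∀ y ∈ Y, ¬ G.Adj s y) :
    ∃ S' ⊆ S, S'.ncard ≤ CE G X Y S ∧
      ∀ K : Set V, IsImportantWitness G X Y S' K ↔ IsImportantWitness G X Y S K :=
  exists_small_subset_same_important_witness_general G X Y S hnorm hS hSY
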